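/- Conversely, let π̂ : S × Σ → [0,∞), q : S → (0,∞), and P̂ : S × S → [0,∞) satisfy: Σ_σ π̂(i,σ) = q(i), Σ_i q(i) = 1, Σ_i P̂(i,j) = q(j) for all j, and P̂(i,j) = Σ_σ T(i,σ,j)·π̂(i,σ). Define π(i,σ) = π̂(i,σ)/q(i) and P(i,j) = P̂(i,j)/q(i). Then π is a valid randomized policy (rows sum to 1, entries nonnegative), P is the Markov chain induced by π from T, P is a stochastic matrix, and q is a stationary distribution of P. -/
import Mathlib


/-- Recovering a valid policy and an induced stationary Markov chain from a
feasible occupation-measure solution. -/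
theorem stmt12 {S A : Type*} [Fintype S] [Fintype A]
    (T : S → A → S → ℝ) (polHat : S → A → ℝ) (q : S → ℝ) (PHat : S → S → ℝ)
    (hT0 : ∀ s σ s', 0 ≤ T s σ s') (hT1 : ∀ s σ s', T s σ s' ≤ 1)
    (hTrow : ∀ s σ, ∑ s', T s σ s' = 1)
    (hpolHat0 : ∀ i σ, 0 ≤ polHat i σ) (hPHat0 : ∀ i j, 0 ≤ PHat i j)
    (hq0 : ∀ i, 0 < q i) (hqsum : ∑ i, q i = 1)
    (hrow : ∀ i, ∑ σ, polHat i σ = q i)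
    (hcol : ∀ j, ∑ i, PHat i j = q j)
    (hind : ∀ i j, PHat i j = ∑ σ, T i σ j * polHat i σ) :
    (∀ i σ, 0 ≤ polHat i σ / q i) ∧
    (∀ i, ∑ σ, polHat i σ / q i = 1) ∧
    (∀ i j, PHat i j / q i = ∑ σ, T i σ j * (polHat i σ / q i)) ∧
    (∀ i j, 0 ≤ PHat i j / q i) ∧
    (∀ i, ∑ j, PHat i j / q i = 1) ∧
    (∀ j, ∑ i, q i * (PHat i j / q i) = q j) := by
  have hqne : ∀ i, q i ≠ 0 := fun i => (hq0 i).ne'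
  refine ⟨fun i σ => div_nonneg (hpolHat0 i σ) (hq0 i).le,
    fun i => by rw [← Finset.sum_div, hrow, div_self (hqne i)],
    fun i j => by
      rw [hind, Finset.sum_div]
      exact Finset.sum_congr rfl fun σ _ => (mul_div_assoc _ _ _),
    fun i j => div_nonneg (hPHat0 i j) (hq0 i).le,
    fun i => by
      rw [← Finset.sum_div]
      have : ∑ j, PHat i j = q i := by
        simp only [hind]
        rw [Finset.sum_comm]
        simp only [← Finset.sum_mul]
        simp only [hTrow, one_mul, hrow]
      rw [this, div_self (hqne i)],
    fun j => by
      have : ∀ i, q i * (PHat i j / q i) = PHat i j := fun i =>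
        mul_div_cancel₀ _ (hqne i)
      simp only [this, hcol]⟩
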